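/- For all integers n ≥ 1 and k with 2k ≥ n + 1 and k ≤ n, the number of flattened Catalan words of length n with exactly k runs of descents equals 2^(2k − n − 1) · C(n − 1, 2(n − k)), where C denotes the binomial coefficient; and this number is 0 when 2k < n + 1. -/

import Mathlib

/-- `w : ℕ → ℕ` encodes a Catalan word of length `n` (0-indexed letters
`w 0, w 1, …, w (n-1)`): the first letter is `0`, each letter is at most the
previous one plus one, and `w` is normalized to vanish at positions `≥ n`. -/
def IsCatalanWord (n : ℕ) (w : ℕ → ℕ) : Prop :=
  w 0 = 0 ∧ (∀ i, i + 1 < n → w (i + 1) ≤ w i + 1) ∧ ∀ i, n ≤ i → w i = 0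

/-- `j` is the starting position of one of the maximal weakly increasing
contiguous subwords (runs of weak ascents) of the length-`n` word `w`. -/
def IsRunStart (n : ℕ) (w : ℕ → ℕ) (j : ℕ) : Prop :=
  j < n ∧ (j = 0 ∨ w j < w (j - 1))

/-- A word is flattened when the leading terms of its maximal weakly increasing
contiguous subwords, read from left to right, form a weakly increasing sequence. -/
def IsFlattened (n : ℕ) (w : ℕ → ℕ) : Prop :=
  ∀ i j, IsRunStart n w i → IsRunStart n w j → i ≤ j → w i ≤ w j

/-- The set of flattened Catalan words of length `n`. -/
def FlatCat (n : ℕ) : Set (ℕ → ℕ) := {w | IsCatalanWord n w ∧ IsFlattened n w}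

/-- Number of maximal strictly increasing contiguous subwords (runs of ascents):
`1 + #{ i : w_i ≥ w_{i+1} }`. -/
noncomputable def runsAsc (n : ℕ) (w : ℕ → ℕ) : ℕ :=
  1 + {i : ℕ | i + 1 < n ∧ w (i + 1) ≤ w i}.ncard

/-- Number of maximal weakly increasing contiguous subwords (runs of weak
ascents): `1 + #{ i : w_i > w_{i+1} }`. -/
noncomputable def wruns (n : ℕ) (w : ℕ → ℕ) : ℕ :=
  1 + {i : ℕ | i + 1 < n ∧ w (i + 1) < w i}.ncard

/-- Number of maximal strictly decreasing contiguous subwords (runs of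
descents): `1 + #{ i : w_i ≤ w_{i+1} }`. -/
noncomputable def runsDesc (n : ℕ) (w : ℕ → ℕ) : ℕ :=
  1 + {i : ℕ | i + 1 < n ∧ w i ≤ w (i + 1)}.ncard

/-- Number of maximal weakly decreasing contiguous subwords (runs of weak
descents): `1 + #{ i : w_i < w_{i+1} }`. -/
noncomputable def wrunsDesc (n : ℕ) (w : ℕ → ℕ) : ℕ :=
  1 + {i : ℕ | i + 1 < n ∧ w i < w (i + 1)}.ncard

/-- An `ℓ`-valley `a b^ℓ (b+1)` (with `a > b`) occurring at position `i` of the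
length-`n` word `w`. -/
def IsLValley (n : ℕ) (w : ℕ → ℕ) (ℓ i : ℕ) : Prop :=
  i + ℓ + 1 < n ∧ w (i + 1) < w i ∧ (∀ t, 1 ≤ t → t ≤ ℓ → w (i + t) = w (i + 1)) ∧
    w (i + ℓ + 1) = w (i + 1) + 1

/-- Number of `ℓ`-valleys of `w`. -/
noncomputable def lValleyCount (n : ℕ) (w : ℕ → ℕ) (ℓ : ℕ) : ℕ :=
  {i : ℕ | IsLValley n w ℓ i}.ncard

/-- Number of valleys of `w` (all `ℓ`-valleys, `ℓ ≥ 1`). -/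
noncomputable def valleyCount (n : ℕ) (w : ℕ → ℕ) : ℕ :=
  {p : ℕ × ℕ | 1 ≤ p.2 ∧ IsLValley n w p.2 p.1}.ncard

/-- A symmetric valley `a (a-1)^ℓ a` (with `ℓ ≥ 1`) occurring at position `i`. -/
def IsSymValley (n : ℕ) (w : ℕ → ℕ) (ℓ i : ℕ) : Prop :=
  i + ℓ + 1 < n ∧ w i = w (i + 1) + 1 ∧ (∀ t, 1 ≤ t → t ≤ ℓ → w (i + t) = w (i + 1)) ∧
    w (i + ℓ + 1) = w i

/-- Number of symmetric valleys of `w` (over all `ℓ ≥ 1`). -/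
noncomputable def symValleyCount (n : ℕ) (w : ℕ → ℕ) : ℕ :=
  {p : ℕ × ℕ | 1 ≤ p.2 ∧ IsSymValley n w p.2 p.1}.ncard

/-- An `ℓ`-peak `a (a+1)^ℓ b` (with `a ≥ b`) occurring at position `i` of the
length-`n` word `w`. -/
def IsLPeak (n : ℕ) (w : ℕ → ℕ) (ℓ i : ℕ) : Prop :=
  i + ℓ + 1 < n ∧ (∀ t, 1 ≤ t → t ≤ ℓ → w (i + t) = w i + 1) ∧ w (i + ℓ + 1) ≤ w i

/-- Number of `ℓ`-peaks of `w`. -/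
noncomputable def lPeakCount (n : ℕ) (w : ℕ → ℕ) (ℓ : ℕ) : ℕ :=
  {i : ℕ | IsLPeak n w ℓ i}.ncard

/-- Number of peaks of `w` (all `ℓ`-peaks, `ℓ ≥ 1`). -/
noncomputable def peakCount (n : ℕ) (w : ℕ → ℕ) : ℕ :=
  {p : ℕ × ℕ | 1 ≤ p.2 ∧ IsLPeak n w p.2 p.1}.ncard

/-- A symmetric peak `a (a+1)^ℓ a` (with `ℓ ≥ 1`) occurring at position `i`. -/
def IsSymPeak (n : ℕ) (w : ℕ → ℕ) (ℓ i : ℕ) : Prop :=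
  i + ℓ + 1 < n ∧ (∀ t, 1 ≤ t → t ≤ ℓ → w (i + t) = w i + 1) ∧ w (i + ℓ + 1) = w i

/-- Number of symmetric peaks of `w` (over all `ℓ ≥ 1`). -/
noncomputable def symPeakCount (n : ℕ) (w : ℕ → ℕ) : ℕ :=
  {p : ℕ × ℕ | 1 ≤ p.2 ∧ IsSymPeak n w p.2 p.1}.ncard


/-!
Read a word gap by gap: each gap is flat, an up-step or a descent. In a flattened Catalan word a
descent lands no lower than the start of its run of weak ascents, and the run climbs in unit steps,
so the descent lands at the foot of exactly one up-step of that run, its *mark*. Marks and descents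
alternate, so a word with `d` descents has `2d` special gaps, and every other gap is a flat step or
a free up-step. Conversely, any `2d` special gaps among the `n - 1` gaps together with a flat/up
choice for the remaining ones decode to a unique such word: specials of even rank climb and record
the current level, specials of odd rank descend to the recorded level. This gives
`C(n - 1, 2d) * 2 ^ (n - 1 - 2d)` words with `d` descents, and such a word has `n - d` runs of
descents.
-/

open Finset

namespace FlatCatalan

def rank (S : Finset ℕ) (i : ℕ) : ℕ := #(S.filter (· < i))

lemma rank_zero (S : Finset ℕ) : rank S 0 = 0 := by simp [rank]

lemma rank_succ (S : Finset ℕ) (i : ℕ) :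
    rank S (i + 1) = rank S i + if i ∈ S then 1 else 0 := by
  have : S.filter (· < i + 1) =
      if i ∈ S then insert i (S.filter (· < i)) else S.filter (· < i) := by
    ext t; split_ifs with h <;> simp only [mem_filter, mem_insert] <;> grind
  unfold rank; rw [this]; split_ifs <;> simp

lemma rank_of_forall_lt {S : Finset ℕ} {i : ℕ} (h : ∀ s ∈ S, s < i) : rank S i = #S := by
  rw [rank, filter_true_of_mem h]

lemma rank_eq_of_forall_notMem {S : Finset ℕ} {a b : ℕ} (hab : a ≤ b)
    (h : ∀ t, a ≤ t → t < b → t ∉ S) : rank S b = rank S a := by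
  induction b, hab using Nat.le_induction with
  | base => rfl
  | succ b hab ih =>
    rw [rank_succ, if_neg (h b hab (by omega)), ih fun t ht ht' => h t ht (by omega), add_zero]

/-- The ranks of the elements of `S` are `0, 1, …, #S - 1`. -/
lemma card_filter_odd_rank (S : Finset ℕ) : #(S.filter fun s => Odd (rank S s)) = #S / 2 := by
  induction S using Finset.induction_on_max with
  | empty => simp
  | insert a s ha ih =>
    have has : a ∉ s := fun h => lt_irrefl a (ha a h)
    have hrank : ∀ x ∈ s, rank (insert a s) x = rank s x := fun x hx => by
      unfold rank; congr 1; ext t; simp only [mem_filter, mem_insert]; grind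
    have hra : rank (insert a s) a = #s := by
      unfold rank; rw [filter_insert, if_neg (lt_irrefl a), filter_true_of_mem ha]
    rw [filter_insert, hra, filter_congr fun x hx => by rw [hrank x hx], card_insert_of_notMem has]
    split_ifs with ho
    · rw [card_insert_of_notMem (by simp [has]), ih]; obtain ⟨m, hm⟩ := ho; omega
    · rw [ih]; obtain ⟨m, hm⟩ := Nat.not_odd_iff_even.1 ho; omega

/-- The state `(letter, floor)` reached after reading the gaps `0, …, i - 1` of a code `(S, T)`. -/
def decodeState (S T : Finset ℕ) : ℕ → ℕ × ℕ
  | 0 => (0, 0)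
  | i + 1 =>
    if i ∈ S then
      if Even (rank S i) then ((decodeState S T i).1 + 1, (decodeState S T i).1)
      else ((decodeState S T i).2, (decodeState S T i).2)
    else if i ∈ T then ((decodeState S T i).1 + 1, (decodeState S T i).2)
    else decodeState S T i

def letter (S T : Finset ℕ) (i : ℕ) : ℕ := (decodeState S T i).1

def floor (S T : Finset ℕ) (i : ℕ) : ℕ := (decodeState S T i).2

def decode (n : ℕ) (S T : Finset ℕ) (i : ℕ) : ℕ := if i < n then letter S T i else 0

section Decoding

variable {S T : Finset ℕ} {i : ℕ}

lemma decodeState_succ_of_even (hi : i ∈ S) (he : Even (rank S i)) :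
    letter S T (i + 1) = letter S T i + 1 ∧ floor S T (i + 1) = letter S T i := by
  simp [letter, floor, decodeState, hi, he]

lemma decodeState_succ_of_odd (hi : i ∈ S) (ho : Odd (rank S i)) :
    letter S T (i + 1) = floor S T i ∧ floor S T (i + 1) = floor S T i := by
  simp [letter, floor, decodeState, hi, Nat.not_even_iff_odd.2 ho]

lemma decodeState_succ_of_notMem_of_mem (hS : i ∉ S) (hT : i ∈ T) :
    letter S T (i + 1) = letter S T i + 1 ∧ floor S T (i + 1) = floor S T i := by
  simp [letter, floor, decodeState, hS, hT]

lemma decodeState_succ_of_notMem_of_notMem (hS : i ∉ S) (hT : i ∉ T) :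
    letter S T (i + 1) = letter S T i ∧ floor S T (i + 1) = floor S T i := by
  simp [letter, floor, decodeState, hS, hT]

lemma decodeState_succ_cases (S T : Finset ℕ) (i : ℕ) :
    (i ∈ S ∧ Even (rank S i) ∧
      letter S T (i + 1) = letter S T i + 1 ∧ floor S T (i + 1) = letter S T i) ∨
    (i ∈ S ∧ Odd (rank S i) ∧
      letter S T (i + 1) = floor S T i ∧ floor S T (i + 1) = floor S T i) ∨
    (i ∉ S ∧ i ∈ T ∧
      letter S T (i + 1) = letter S T i + 1 ∧ floor S T (i + 1) = floor S T i) ∨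
    (i ∉ S ∧ i ∉ T ∧ letter S T (i + 1) = letter S T i ∧ floor S T (i + 1) = floor S T i) := by
  by_cases hS : i ∈ S
  · rcases Nat.even_or_odd (rank S i) with he | ho
    · exact Or.inl ⟨hS, he, decodeState_succ_of_even hS he⟩
    · exact Or.inr (Or.inl ⟨hS, ho, decodeState_succ_of_odd hS ho⟩)
  · by_cases hT : i ∈ T
    · exact Or.inr (Or.inr (Or.inl ⟨hS, hT, decodeState_succ_of_notMem_of_mem hS hT⟩))
    · exact Or.inr (Or.inr (Or.inr ⟨hS, hT, decodeState_succ_of_notMem_of_notMem hS hT⟩))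

lemma floor_le_letter (S T : Finset ℕ) (i : ℕ) : floor S T i ≤ letter S T i := by
  induction i with
  | zero => rfl
  | succ i ih =>
    rcases decodeState_succ_cases S T i with ⟨-, -, h⟩ | ⟨-, -, h⟩ | ⟨-, -, h⟩ | ⟨-, -, h⟩ <;>
      omega

lemma floor_mono (S T : Finset ℕ) : Monotone (floor S T) := by
  refine monotone_nat_of_le_succ fun i => ?_
  have := floor_le_letter S T i
  rcases decodeState_succ_cases S T i with ⟨-, -, h⟩ | ⟨-, -, h⟩ | ⟨-, -, h⟩ | ⟨-, -, h⟩ <;> omega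

lemma letter_succ_le (S T : Finset ℕ) (i : ℕ) : letter S T (i + 1) ≤ letter S T i + 1 := by
  have := floor_le_letter S T i
  rcases decodeState_succ_cases S T i with ⟨-, -, h⟩ | ⟨-, -, h⟩ | ⟨-, -, h⟩ | ⟨-, -, h⟩ <;> omega

lemma floor_lt_letter_of_odd (ho : Odd (rank S i)) : floor S T i < letter S T i := by
  induction i with
  | zero => simp [rank_zero] at ho
  | succ i ih =>
    rw [rank_succ] at ho
    rcases decodeState_succ_cases S T i with ⟨-, -, h⟩ | ⟨hS, ho', -⟩ | ⟨hS, -, h⟩ | ⟨hS, -, h⟩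
    · omega
    · rw [if_pos hS, Nat.odd_add_one] at ho
      exact absurd ho' ho
    all_goals rw [if_neg hS, add_zero] at ho; have := ih ho; omega

lemma letter_succ_lt_iff : letter S T (i + 1) < letter S T i ↔ i ∈ S ∧ Odd (rank S i) := by
  rcases decodeState_succ_cases S T i with ⟨hS, he, h⟩ | ⟨hS, ho, h⟩ | ⟨hS, -, h⟩ | ⟨hS, -, h⟩
  · simp only [hS, true_and, Nat.not_odd_iff_even.2 he, iff_false]
    omega
  · have := floor_lt_letter_of_odd (T := T) ho
    simp only [hS, ho, and_self, iff_true]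
    omega
  all_goals simp only [hS, false_and, iff_false, not_lt]; omega

lemma floor_eq_of_forall_notMem {a b : ℕ} (hab : a ≤ b) (h : ∀ t, a ≤ t → t < b → t ∉ S) :
    floor S T b = floor S T a := by
  induction b, hab using Nat.le_induction with
  | base => rfl
  | succ b hab ih =>
    rw [← ih fun t ht ht' => h t ht (by omega)]
    rcases decodeState_succ_cases S T b with ⟨hS, -⟩ | ⟨hS, -⟩ | ⟨-, -, -, h⟩ | ⟨-, -, -, h⟩
    iterate 2 exact absurd hS (h b hab (by omega))
    all_goals exact h

end Decoding

lemma exists_next_of_even_rank {S : Finset ℕ} (hS : Even #S) {i : ℕ} (hi : i ∈ S)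
    (he : Even (rank S i)) :
    ∃ j ∈ S, i < j ∧ Odd (rank S j) ∧ ∀ t, i < t → t < j → t ∉ S := by
  have hodd : Odd (rank S (i + 1)) := by rw [rank_succ, if_pos hi]; exact he.add_one
  have hne : (S.filter (i < ·)).Nonempty := by
    by_contra h
    rw [not_nonempty_iff_eq_empty, filter_eq_empty_iff] at h
    rw [rank_of_forall_lt fun s hs => by have := h hs; omega] at hodd
    exact Nat.not_odd_iff_even.2 hS hodd
  obtain ⟨hjS, hij⟩ := mem_filter.1 (min'_mem _ hne)
  have hmin : ∀ t, i < t → t < (S.filter (i < ·)).min' hne → t ∉ S := fun t h1 h2 hts =>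
    not_le.2 h2 (min'_le _ _ (mem_filter.2 ⟨hts, h1⟩))
  refine ⟨_, hjS, hij, ?_, hmin⟩
  rwa [rank_eq_of_forall_notMem hij fun t h1 h2 => hmin t (by omega) h2]

open scoped Classical

section Words

variable {n : ℕ} {w : ℕ → ℕ} {i j p q : ℕ}

def IsDescent (n : ℕ) (w : ℕ → ℕ) (i : ℕ) : Prop := i + 1 < n ∧ w (i + 1) < w i

noncomputable def descents (n : ℕ) (w : ℕ → ℕ) : Finset ℕ := (range (n - 1)).filter (IsDescent n w)

def IsMarkOf (n : ℕ) (w : ℕ → ℕ) (p j : ℕ) : Prop :=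
  p < j ∧ w (p + 1) = w p + 1 ∧ w p = w (j + 1) ∧ ∀ t, p < t → t < j → ¬ IsDescent n w t

def IsMark (n : ℕ) (w : ℕ → ℕ) (p : ℕ) : Prop := ∃ j, IsDescent n w j ∧ IsMarkOf n w p j

noncomputable def marks (n : ℕ) (w : ℕ → ℕ) : Finset ℕ := (range (n - 1)).filter (IsMark n w)

def IsPending (n : ℕ) (w : ℕ → ℕ) (i p : ℕ) : Prop :=
  ∃ j, IsDescent n w j ∧ IsMarkOf n w p j ∧ p < i ∧ i ≤ j

lemma mem_descents : i ∈ descents n w ↔ IsDescent n w i := by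
  simp only [descents, mem_filter, mem_range, and_iff_right_iff_imp]
  exact fun h => by have := h.1; omega

lemma IsMark.add_one_lt (h : IsMark n w p) : p + 1 < n := by
  obtain ⟨j, hj, hpj⟩ := h; have := hj.1; have := hpj.1; omega

lemma mem_marks : p ∈ marks n w ↔ IsMark n w p := by
  simp only [marks, mem_filter, mem_range, and_iff_right_iff_imp]
  exact fun h => by have := h.add_one_lt; omega

lemma IsMark.not_isDescent (h : IsMark n w p) : ¬ IsDescent n w p := by
  obtain ⟨_, _, hpj⟩ := h; rintro ⟨_, hd⟩; have := hpj.2.1; omega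

lemma le_of_forall_not_isDescent {a b : ℕ} (hab : a ≤ b) (hb : b < n)
    (h : ∀ t, a ≤ t → t < b → ¬ IsDescent n w t) : w a ≤ w b := by
  induction b, hab using Nat.le_induction with
  | base => rfl
  | succ b hab ih =>
    have := ih (by omega) fun t ht ht' => h t ht (by omega)
    have : ¬ w (b + 1) < w b := fun hlt => h b hab (by omega) ⟨hb, hlt⟩
    omega

lemma IsMarkOf.unique (hp : IsMarkOf n w p j) (hq : IsMarkOf n w q j) (hj : IsDescent n w j) :
    p = q := by
  have key : ∀ {a b}, IsMarkOf n w a j → IsMarkOf n w b j → ¬ a < b := by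
    rintro a b ⟨-, hup, hlev, hnd⟩ ⟨hbj, -, hlev', -⟩ hab
    have := le_of_forall_not_isDescent (a := a + 1) hab (by have := hj.1; omega)
      fun t ht ht' => hnd t (by omega) (by omega)
    omega
  exact le_antisymm (not_lt.1 (key hq hp)) (not_lt.1 (key hp hq))

lemma exists_up_step_of_le_of_lt {f : ℕ → ℕ} {a b s : ℕ} (hab : a ≤ b)
    (hf : ∀ t, a ≤ t → t < b → f (t + 1) ≤ f t + 1) (ha : f a ≤ s) (hb : s < f b) :
    ∃ p, a ≤ p ∧ p < b ∧ f p = s ∧ f (p + 1) = s + 1 := by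
  induction b, hab using Nat.le_induction with
  | base => omega
  | succ b hab ih =>
    by_cases hs : s < f b
    · obtain ⟨p, h⟩ := ih (fun t ht ht' => hf t ht (by omega)) hs
      exact ⟨p, h.1, by omega, h.2.2⟩
    · have := hf b hab (by omega)
      exact ⟨b, hab, by omega, by omega, by omega⟩

/-- A descent lands at or above the start of its run of weak ascents, which climbs in unit steps. -/
lemma exists_isMarkOf (hw : IsCatalanWord n w) (hf : IsFlattened n w) (hj : IsDescent n w j) :
    ∃ p, IsMarkOf n w p j := by
  have hex : ∃ a, ∀ t, a ≤ t → t < j → ¬ IsDescent n w t := ⟨j, fun t h h' => by omega⟩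
  set a := Nat.find hex
  have ha : ∀ t, a ≤ t → t < j → ¬ IsDescent n w t := Nat.find_spec hex
  have haj : a ≤ j := Nat.find_min' hex fun t h h' => by omega
  have hjn := hj.1
  have hrun : IsRunStart n w a := by
    refine ⟨by omega, ?_⟩
    rcases Nat.eq_zero_or_pos a with h0 | hpos
    · exact Or.inl h0
    · obtain ⟨t, ht, htj, hdt⟩ : ∃ t, a - 1 ≤ t ∧ t < j ∧ IsDescent n w t := by
        simpa using Nat.find_min hex (show a - 1 < a by omega)
      obtain rfl : t = a - 1 := by by_contra h; exact ha t (by omega) htj hdt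
      exact Or.inr (by simpa [Nat.sub_add_cancel hpos] using hdt.2)
  have hlow : w a ≤ w (j + 1) := hf a (j + 1) hrun ⟨hjn, Or.inr (by simpa using hj.2)⟩ (by omega)
  obtain ⟨p, hap, hpj, hp, hp1⟩ := exists_up_step_of_le_of_lt haj
    (fun t _ ht => hw.2.1 t (by omega)) hlow hj.2
  exact ⟨p, hpj, by omega, hp, fun t ht ht' => ha t (by omega) ht'⟩

lemma not_isPending_succ_of_isDescent (hi : IsDescent n w i) : ¬ IsPending n w (i + 1) p := by
  rintro ⟨j, -, hpj, hp, hij⟩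
  rcases Nat.lt_succ_iff_lt_or_eq.1 hp with hpi | rfl
  · exact hpj.2.2.2 i hpi (by omega) hi
  · have := hi.2; have := hpj.2.1; omega

lemma not_isPending_of_isMarkOf (hij : IsMarkOf n w i j) (hj : IsDescent n w j) :
    ¬ IsPending n w i p := by
  rintro ⟨j', hj', hpj', hp, hij'⟩
  have hne : i ≠ j' := by rintro rfl; exact IsMark.not_isDescent ⟨j, hj, hij⟩ hj'
  have : j = j' := by
    rcases lt_trichotomy j j' with h | h | h
    · exact absurd hj (hpj'.2.2.2 j (by have := hij.1; omega) h)
    · exact h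
    · exact absurd hj' (hij.2.2.2 j' (by omega) h)
  subst this
  exact absurd (hpj'.unique hij hj) hp.ne

lemma isPending_succ_iff_of_isMarkOf (hij : IsMarkOf n w i j) (hj : IsDescent n w j) :
    IsPending n w (i + 1) p ↔ p = i := by
  constructor
  · rintro ⟨j', hj', hpj', hpi, hij'⟩
    by_contra hne
    exact not_isPending_of_isMarkOf hij hj ⟨j', hj', hpj', by omega, by omega⟩
  · rintro rfl
    exact ⟨j, hj, hij, by omega, hij.1⟩

lemma isPending_succ_iff (hd : ¬ IsDescent n w i) (hm : ¬ IsMark n w i) :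
    IsPending n w (i + 1) p ↔ IsPending n w i p := by
  constructor
  · rintro ⟨j, hj, hpj, hp, hij⟩
    have hpi : p ≠ i := by rintro rfl; exact hm ⟨j, hj, hpj⟩
    exact ⟨j, hj, hpj, by omega, by omega⟩
  · rintro ⟨j, hj, hpj, hp, hij⟩
    have hij' : i ≠ j := by rintro rfl; exact hd hj
    exact ⟨j, hj, hpj, by omega, by omega⟩

noncomputable def specials (n : ℕ) (w : ℕ → ℕ) : Finset ℕ := descents n w ∪ marks n w

noncomputable def freeUps (n : ℕ) (w : ℕ → ℕ) : Finset ℕ :=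
  (range (n - 1)).filter fun i => w (i + 1) = w i + 1 ∧ ¬ IsMark n w i

lemma mem_specials : i ∈ specials n w ↔ IsDescent n w i ∨ IsMark n w i := by
  rw [specials, mem_union, mem_descents, mem_marks]

/-- Reading left to right, marks and descents alternate, starting with a mark. -/
theorem rank_specials (hw : IsCatalanWord n w) (hf : IsFlattened n w) (i : ℕ) :
    rank (specials n w) i =
      2 * rank (descents n w) i + if ∃ p, IsPending n w i p then 1 else 0 := by
  induction i with
  | zero => simp [rank_zero, IsPending]
  | succ i ih =>
    rw [rank_succ, rank_succ, ih]
    by_cases hd : IsDescent n w i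
    · obtain ⟨p, hp⟩ := exists_isMarkOf hw hf hd
      have h1 : ∃ p, IsPending n w i p := ⟨p, i, hd, hp, hp.1, le_rfl⟩
      have h2 : ¬ ∃ p, IsPending n w (i + 1) p := fun ⟨_, hp⟩ =>
        not_isPending_succ_of_isDescent hd hp
      simp only [mem_specials, mem_descents, hd, true_or, if_true, if_pos h1, if_neg h2]
      omega
    · by_cases hm : IsMark n w i
      · obtain ⟨j, hj, hij⟩ := hm
        have h1 : ¬ ∃ p, IsPending n w i p := fun ⟨_, hp⟩ => not_isPending_of_isMarkOf hij hj hp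
        have h2 : ∃ p, IsPending n w (i + 1) p := ⟨i, (isPending_succ_iff_of_isMarkOf hij hj).2 rfl⟩
        simp only [mem_specials, mem_descents, hd, if_neg h1, if_pos h2, if_false]
        rw [if_pos (Or.inr ⟨j, hj, hij⟩)]
        ring
      · simp only [mem_specials, mem_descents, hd, hm, or_self, if_false, isPending_succ_iff hd hm]
        ring

lemma odd_rank_specials_iff (hw : IsCatalanWord n w) (hf : IsFlattened n w) :
    Odd (rank (specials n w) i) ↔ ∃ p, IsPending n w i p := by
  rw [rank_specials hw hf]
  split_ifs with h <;> simp [h, parity_simps]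

lemma card_specials (hw : IsCatalanWord n w) (hf : IsFlattened n w) :
    #(specials n w) = 2 * #(descents n w) := by
  have := rank_specials hw hf n
  rwa [rank_of_forall_lt, rank_of_forall_lt, if_neg, add_zero] at this
  · rintro ⟨p, j, hj, -, -, hnj⟩; have := hj.1; omega
  · intro s hs; have := (mem_descents.1 hs).1; omega
  · intro s hs
    rcases mem_specials.1 hs with h | h
    · have := h.1; omega
    · have := h.add_one_lt; omega

lemma card_marks (hw : IsCatalanWord n w) (hf : IsFlattened n w) :
    #(marks n w) = #(descents n w) := by
  have := card_specials hw hf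
  rw [specials, card_union_of_disjoint] at this
  · omega
  · exact disjoint_left.2 fun i hd hm => (mem_marks.1 hm).not_isDescent (mem_descents.1 hd)

lemma letter_specials_freeUps (hw : IsCatalanWord n w) (hf : IsFlattened n w) (hi : i < n) :
    letter (specials n w) (freeUps n w) i = w i ∧
      ∀ p, IsPending n w i p → floor (specials n w) (freeUps n w) i = w p := by
  induction i with
  | zero => exact ⟨hw.1.symm, fun p ⟨_, _, _, hp, _⟩ => absurd hp (Nat.not_lt_zero p)⟩
  | succ i ih =>
    obtain ⟨ihl, ihf⟩ := ih (by omega)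
    by_cases hd : IsDescent n w i
    · obtain ⟨p, hp⟩ := exists_isMarkOf hw hf hd
      have hpend : IsPending n w i p := ⟨i, hd, hp, hp.1, le_rfl⟩
      obtain ⟨h1, -⟩ := decodeState_succ_of_odd (T := freeUps n w) (mem_specials.2 (Or.inl hd))
        ((odd_rank_specials_iff hw hf).2 ⟨p, hpend⟩)
      exact ⟨by rw [h1, ihf p hpend, hp.2.2.1], fun q hq =>
        absurd hq (not_isPending_succ_of_isDescent hd)⟩
    by_cases hm : IsMark n w i
    · obtain ⟨j, hj, hij⟩ := hm
      have he : Even (rank (specials n w) i) := Nat.not_odd_iff_even.1 fun ho =>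
        let ⟨_, hp⟩ := (odd_rank_specials_iff hw hf).1 ho
        not_isPending_of_isMarkOf hij hj hp
      obtain ⟨h1, h2⟩ := decodeState_succ_of_even (T := freeUps n w)
        (mem_specials.2 (Or.inr ⟨j, hj, hij⟩)) he
      exact ⟨by rw [h1, ihl, hij.2.1], fun q hq => by
        rw [(isPending_succ_iff_of_isMarkOf hij hj).1 hq, h2, ihl]⟩
    have hS : i ∉ specials n w := fun h => (mem_specials.1 h).elim hd hm
    have hpend := fun q => isPending_succ_iff (p := q) hd hm
    by_cases hu : w (i + 1) = w i + 1
    · obtain ⟨h1, h2⟩ := decodeState_succ_of_notMem_of_mem hS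
        (show i ∈ freeUps n w from mem_filter.2 ⟨mem_range.2 (by omega), hu, hm⟩)
      exact ⟨by rw [h1, ihl, hu], fun q hq => by rw [h2, ihf q ((hpend q).1 hq)]⟩
    · have hT : i ∉ freeUps n w := fun h => hu (mem_filter.1 h).2.1
      obtain ⟨h1, h2⟩ := decodeState_succ_of_notMem_of_notMem hS hT
      have := hw.2.1 i (by omega)
      have : ¬ w (i + 1) < w i := fun h => hd ⟨by omega, h⟩
      exact ⟨by rw [h1, ihl]; omega, fun q hq => by rw [h2, ihf q ((hpend q).1 hq)]⟩

lemma decode_specials_freeUps (hw : IsCatalanWord n w) (hf : IsFlattened n w) :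
    decode n (specials n w) (freeUps n w) = w := by
  funext i
  by_cases hi : i < n
  · rw [decode, if_pos hi, (letter_specials_freeUps hw hf hi).1]
  · rw [decode, if_neg hi, hw.2.2 i (by omega)]

end Words

section Decode

variable {n : ℕ} {S T : Finset ℕ} {i : ℕ}

lemma decode_of_lt (hi : i < n) : decode n S T i = letter S T i := if_pos hi

lemma decode_mem_flatCat : decode n S T ∈ FlatCat n := by
  have hstart : ∀ j, IsRunStart n (decode n S T) j → decode n S T j = floor S T j := by
    rintro j ⟨hj, rfl | hdesc⟩
    · rw [decode_of_lt hj]; rfl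
    · obtain ⟨i, rfl⟩ : ∃ i, j = i + 1 := ⟨j - 1, by rcases j with _ | j <;> simp_all⟩
      rw [Nat.add_sub_cancel, decode_of_lt hj, decode_of_lt (by omega)] at hdesc
      obtain ⟨hS, ho⟩ := letter_succ_lt_iff.1 hdesc
      obtain ⟨h1, h2⟩ := decodeState_succ_of_odd (T := T) hS ho
      rw [decode_of_lt hj, h1, h2]
  refine ⟨⟨?_, fun i hi => ?_, fun i hi => if_neg (by omega)⟩, fun i j hi hj hij => ?_⟩
  · unfold decode; split_ifs <;> rfl
  · rw [decode_of_lt hi, decode_of_lt (by omega)]; exact letter_succ_le S T i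
  · rw [hstart i hi, hstart j hj]; exact floor_mono S T hij

lemma isDescent_decode_iff (hS : S ⊆ range (n - 1)) :
    IsDescent n (decode n S T) i ↔ i ∈ S ∧ Odd (rank S i) := by
  constructor
  · rintro ⟨hi, h⟩
    rw [decode_of_lt hi, decode_of_lt (by omega)] at h
    exact letter_succ_lt_iff.1 h
  · intro h
    have hi : i + 1 < n := by have := mem_range.1 (hS h.1); omega
    refine ⟨hi, ?_⟩
    rw [decode_of_lt hi, decode_of_lt (by omega)]
    exact letter_succ_lt_iff.2 h

lemma descents_decode (hS : S ⊆ range (n - 1)) :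
    descents n (decode n S T) = S.filter fun s => Odd (rank S s) := by
  ext i; rw [mem_descents, isDescent_decode_iff hS, mem_filter]

/-- The descent of the mark `i` is the next special gap, which lands on the floor set at `i`. -/
lemma isMark_decode (hS : S ⊆ range (n - 1)) (heven : Even #S) (hi : i ∈ S)
    (he : Even (rank S i)) : IsMark n (decode n S T) i := by
  obtain ⟨j, hjS, hij, hjo, hgap⟩ := exists_next_of_even_rank heven hi he
  have hj : IsDescent n (decode n S T) j := (isDescent_decode_iff hS).2 ⟨hjS, hjo⟩
  have hjn := hj.1
  obtain ⟨h1, h2⟩ := decodeState_succ_of_even (T := T) hi he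
  obtain ⟨g1, -⟩ := decodeState_succ_of_odd (T := T) hjS hjo
  have hfloor : floor S T j = floor S T (i + 1) :=
    floor_eq_of_forall_notMem hij fun t ht ht' => hgap t (by omega) ht'
  refine ⟨j, hj, hij, ?_, ?_, fun t ht ht' hd => hgap t ht ht' ((isDescent_decode_iff hS).1 hd).1⟩
  · rw [decode_of_lt (by omega), decode_of_lt (by omega), h1]
  · rw [decode_of_lt (by omega), decode_of_lt hjn, g1, hfloor, h2]

/-- The marks found by `isMark_decode` are all of them: marks and descents are equinumerous. -/
lemma marks_decode (hS : S ⊆ range (n - 1)) (heven : Even #S) :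
    marks n (decode n S T) = S.filter fun s => Even (rank S s) := by
  have hw : decode n S T ∈ FlatCat n := decode_mem_flatCat
  symm
  apply eq_of_subset_of_card_le
  · intro i hi
    rw [mem_filter] at hi
    exact mem_marks.2 (isMark_decode hS heven hi.1 hi.2)
  · have hsplit := card_filter_add_card_filter_not (s := S) fun s => Odd (rank S s)
    simp only [Nat.not_odd_iff_even, card_filter_odd_rank] at hsplit
    rw [card_marks hw.1 hw.2, descents_decode hS, card_filter_odd_rank]
    obtain ⟨m, hm⟩ := heven
    omega

lemma specials_decode (hS : S ⊆ range (n - 1)) (heven : Even #S) :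
    specials n (decode n S T) = S := by
  ext i
  rw [specials, descents_decode hS, marks_decode hS heven, mem_union, mem_filter, mem_filter]
  have := Nat.even_or_odd (rank S i)
  tauto

lemma freeUps_decode (hS : S ⊆ range (n - 1)) (hT : T ⊆ range (n - 1) \ S) (heven : Even #S) :
    freeUps n (decode n S T) = T := by
  ext i
  rw [freeUps, mem_filter, ← mem_marks, marks_decode hS heven, mem_filter, mem_range]
  constructor
  · rintro ⟨hi, hup, hmark⟩
    rw [decode_of_lt (by omega), decode_of_lt (by omega)] at hup
    by_contra hiT
    by_cases hiS : i ∈ S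
    · have ho : Odd (rank S i) := Nat.not_even_iff_odd.1 fun he => hmark ⟨hiS, he⟩
      have := letter_succ_lt_iff (T := T) |>.2 ⟨hiS, ho⟩
      omega
    · have := (decodeState_succ_of_notMem_of_notMem hiS hiT).1
      omega
  · intro hiT
    obtain ⟨hi, hiS⟩ := mem_sdiff.1 (hT hiT)
    rw [mem_range] at hi
    refine ⟨hi, ?_, fun h => hiS h.1⟩
    rw [decode_of_lt (by omega), decode_of_lt (by omega)]
    exact (decodeState_succ_of_notMem_of_mem hiS hiT).1

end Decode

/-- `⟨S, T⟩`: `r` special gaps `S` and a set `T` of free up-steps among the other gaps. -/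
def codes (N r : ℕ) : Finset (Σ _ : Finset ℕ, Finset ℕ) :=
  ((range N).powersetCard r).sigma fun S => (range N \ S).powerset

lemma mem_codes {N r : ℕ} {S T : Finset ℕ} :
    ⟨S, T⟩ ∈ codes N r ↔ (S ⊆ range N ∧ #S = r) ∧ T ⊆ range N \ S := by
  rw [codes, mem_sigma, mem_powersetCard, mem_powerset]

lemma card_codes (N r : ℕ) : #(codes N r) = N.choose r * 2 ^ (N - r) := by
  rw [codes, card_sigma, sum_congr rfl fun S hS => ?_, sum_const, card_powersetCard, card_range,
    smul_eq_mul]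
  rw [mem_powersetCard] at hS
  rw [card_powerset, card_sdiff_of_subset hS.1, card_range, hS.2]

theorem ncard_flatCat_descents (n d : ℕ) :
    {w ∈ FlatCat n | #(descents n w) = d}.ncard =
      (n - 1).choose (2 * d) * 2 ^ (n - 1 - 2 * d) := by
  rw [← card_codes, ← Set.ncard_coe_finset]
  refine Set.ncard_congr (fun w _ => ⟨specials n w, freeUps n w⟩) ?_ ?_ ?_
  · rintro w ⟨⟨hw, hf⟩, rfl⟩
    refine mem_codes.2 ⟨⟨union_subset (filter_subset _ _) (filter_subset _ _), card_specials hw hf⟩,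
      fun i hi => ?_⟩
    obtain ⟨hi, hup, hm⟩ := mem_filter.1 hi
    refine mem_sdiff.2 ⟨hi, fun hs => (mem_specials.1 hs).elim (fun hd => ?_) hm⟩
    have := hd.2
    omega
  · rintro w w' ⟨⟨hw, hf⟩, -⟩ ⟨⟨hw', hf'⟩, -⟩ h
    simp only [Sigma.mk.injEq, heq_eq_eq] at h
    rw [← decode_specials_freeUps hw hf, ← decode_specials_freeUps hw' hf', h.1, h.2]
  · rintro ⟨S, T⟩ hST
    obtain ⟨⟨hS, hcard⟩, hT⟩ := mem_codes.1 hST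
    have heven : Even #S := ⟨d, by omega⟩
    refine ⟨decode n S T, ⟨decode_mem_flatCat, ?_⟩, ?_⟩
    · rw [descents_decode hS, card_filter_odd_rank, hcard]
      omega
    · rw [specials_decode hS heven, freeUps_decode hS hT heven]

lemma runsDesc_add_card_descents {n : ℕ} (hn : 1 ≤ n) (w : ℕ → ℕ) :
    runsDesc n w + #(descents n w) = n := by
  have hasc : {i : ℕ | i + 1 < n ∧ w i ≤ w (i + 1)} =
      ↑((range (n - 1)).filter fun i => ¬ IsDescent n w i) := by
    ext i
    simp only [Set.mem_ofPred_eq, coe_filter, mem_range, IsDescent, not_and, not_lt]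
    constructor
    · exact fun h => ⟨by omega, fun _ => h.2⟩
    · exact fun h => ⟨by omega, h.2 (by omega)⟩
  rw [runsDesc, hasc, Set.ncard_coe_finset, descents, add_assoc, add_comm (#_),
    card_filter_add_card_filter_not, card_range]
  omega

theorem ncard_flatCat_runsDesc {n k : ℕ} (hk : 1 ≤ k) (hkn : k ≤ n) :
    {w ∈ FlatCat n | runsDesc n w = k}.ncard =
      (n - 1).choose (2 * (n - k)) * 2 ^ (n - 1 - 2 * (n - k)) := by
  have : {w ∈ FlatCat n | runsDesc n w = k} = {w ∈ FlatCat n | #(descents n w) = n - k} :=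
    Set.ext fun w => and_congr_right fun _ => by
      have := runsDesc_add_card_descents (n := n) (by omega) w
      omega
  rw [this, ncard_flatCat_descents]

end FlatCatalan

theorem flatCat_runsDesc_card_general (n k : ℕ) :
    (n + 1 ≤ 2 * k → k ≤ n →
      {w ∈ FlatCat n | runsDesc n w = k}.ncard =
        2 ^ (2 * k - n - 1) * Nat.choose (n - 1) (2 * (n - k))) ∧
    (2 * k < n + 1 → {w ∈ FlatCat n | runsDesc n w = k}.ncard = 0) := by
  refine ⟨fun h hkn => ?_, fun h => ?_⟩
  · rw [FlatCatalan.ncard_flatCat_runsDesc (by omega) hkn, mul_comm,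
      show n - 1 - 2 * (n - k) = 2 * k - n - 1 by omega]
  · rcases Nat.eq_zero_or_pos k with rfl | hk
    · simp [runsDesc]
    · rw [FlatCatalan.ncard_flatCat_runsDesc hk (by omega), Nat.choose_eq_zero_of_lt (by omega),
        zero_mul]

/-- For `n ≥ 1` and `k` with `2k ≥ n + 1` and `k ≤ n`, the number of flattened
Catalan words of length `n` with exactly `k` runs of descents equals
`2^(2k - n - 1) * C(n - 1, 2(n - k))`; it is `0` when `2k < n + 1`. -/
theorem flatCat_runsDesc_card (n k : ℕ) (hn : 1 ≤ n) :
    (n + 1 ≤ 2 * k → k ≤ n →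
      {w ∈ FlatCat n | runsDesc n w = k}.ncard =
        2 ^ (2 * k - n - 1) * Nat.choose (n - 1) (2 * (n - k))) ∧
    (2 * k < n + 1 → {w ∈ FlatCat n | runsDesc n w = k}.ncard = 0) :=
  flatCat_runsDesc_card_general n k
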